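/- arXiv:2507.22182 — 7 statements merged into one kernel-verified Lean document; each statement's English description precedes it below -/
import Mathlib

section
/- Let (G, +, ∘, ·) be a left diring in which · is left distributive. Then ∘ is associative if and only if · is weakly associative, i.e., (a + a·b)·c = a·(b·c) for all a, b, c ∈ G. -/
/-- In a left diring with `·` left distributive, `∘` is associative iff `·` is
weakly associative: `(a + a·b)·c = a·(b·c)`. -/
theorem stmt_13 {G : Type*} [AddGroup G] (circ mul : G → G → G)
    (link : ∀ a b : G, a + mul a b = circ a b)
    (ldist : ∀ a b c : G, mul a (b + c) = mul a b + mul a c) :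
    (∀ a b c : G, circ (circ a b) c = circ a (circ b c)) ↔
    (∀ a b c : G, mul (a + mul a b) c = mul a (mul b c)) := by
  have key : ∀ a b c : G,
      circ (circ a b) c = a + mul a b + mul (a + mul a b) c ∧
      circ a (circ b c) = a + mul a b + mul a (mul b c) := by
    intro a b c
    constructor
    · rw [← link (circ a b) c, ← link a b]
    · rw [← link a (circ b c), ← link b c, ldist, add_assoc]
  constructor
  · intro h a b c
    have := h a b c
    rw [(key a b c).1, (key a b c).2] at this
    exact add_left_cancel this
  · intro h a b c
    rw [(key a b c).1, (key a b c).2, h]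
end

section
/- Let (G, +, ∘, ·) be a left diring with ∘ associative and · left distributive. Then the map λ₀ : G → G, λ₀(b) = 0·b, is an idempotent endomorphism of (G, +), and consequently G decomposes as a semidirect sum G = G₀ ⋊ G_c of its additive group, where G₀ = { a ∣ 0·a = 0 } and G_c = { a ∣ 0·a = a }. -/
/-- In a left diring with `∘` associative and `·` left distributive, the map
`λ₀ : b ↦ 0·b` is an idempotent endomorphism of `(G,+)`, and hence `G`
decomposes as a semidirect sum `G = G₀ ⋊ G_c` of its additive group, where
`G₀ = {a | 0·a = 0}` and `G_c = {a | 0·a = a}`. -/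
theorem stmt_14 {G : Type*} [AddGroup G] (circ mul : G → G → G)
    (link : ∀ a b : G, a + mul a b = circ a b)
    (assoc : ∀ a b c : G, circ (circ a b) c = circ a (circ b c))
    (ldist : ∀ a b c : G, mul a (b + c) = mul a b + mul a c) :
    (∀ b c : G, mul 0 (b + c) = mul 0 b + mul 0 c) ∧
    (∀ b : G, mul 0 (mul 0 b) = mul 0 b) ∧
    (∃ (G₀ Gc : AddSubgroup G),
      (G₀ : Set G) = {a : G | mul 0 a = 0} ∧
      (Gc : Set G) = {a : G | mul 0 a = a} ∧
      G₀.Normal ∧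
      (∀ a : G, a ∈ G₀ → a ∈ Gc → a = 0) ∧
      (∀ g : G, ∃ k ∈ G₀, ∃ h ∈ Gc, g = k + h)) := by
  have hadd : ∀ b c : G, mul 0 (b + c) = mul 0 b + mul 0 c := fun b c => ldist 0 b c
  have hcirc : ∀ b : G, mul 0 b = circ 0 b := by
    intro b; rw [← link 0 b, zero_add]
  have h00 : mul 0 0 = 0 := by
    have := ldist 0 0 0
    rw [add_zero] at this
    exact (add_eq_left.mp this.symm)
  have hidem : ∀ b : G, mul 0 (mul 0 b) = mul 0 b := by
    intro b
    rw [hcirc b, hcirc (circ 0 b), ← assoc, ← hcirc 0, h00]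
  have hneg : ∀ a : G, mul 0 (-a) = -mul 0 a := by
    intro a
    have := hadd a (-a)
    rw [add_neg_cancel, h00] at this
    exact (neg_eq_of_add_eq_zero_right this.symm).symm
  -- λ₀ as an additive group hom
  let f : G →+ G := AddMonoidHom.mk' (mul 0) hadd
  refine ⟨hadd, hidem, f.ker, ?_, rfl, ?_, f.normal_ker, ?_, ?_⟩
  · exact {
      carrier := {a : G | mul 0 a = a}
      add_mem' := by
        intro a b ha hb
        simp only [Set.mem_setOf_eq] at *
        rw [hadd, ha, hb]
      zero_mem' := h00
      neg_mem' := by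
        intro a ha
        simp only [Set.mem_setOf_eq] at *
        rw [hneg, ha] }
  · rfl
  · intro a ha hb
    simp only [AddMonoidHom.mem_ker, AddMonoidHom.mk'_apply] at ha
    have hb' : mul 0 a = a := hb
    exact hb'.symm.trans ha
  · intro g
    refine ⟨g - mul 0 g, ?_, mul 0 g, hidem g, by simp⟩
    show mul 0 (g - mul 0 g) = 0
    rw [sub_eq_add_neg, hadd, hneg, hidem, add_neg_cancel]
end

section
/- Let (G, +, ∘, ·) be a left diring with ∘ associative and · left distributive. Then (a ∘ b)·c = a·(b·c) for all a, b, c ∈ G. -/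
/-- In a left diring with `∘` associative and `·` left distributive,
`(a ∘ b)·c = a·(b·c)` for all `a, b, c`. -/
theorem stmt_15 {G : Type*} [AddGroup G] (circ mul : G → G → G)
    (link : ∀ a b : G, a + mul a b = circ a b)
    (assoc : ∀ a b c : G, circ (circ a b) c = circ a (circ b c))
    (ldist : ∀ a b c : G, mul a (b + c) = mul a b + mul a c) :
    ∀ a b c : G, mul (circ a b) c = mul a (mul b c) := by
  have h : ∀ x y : G, mul x y = -x + circ x y := by
    intro x y
    rw [← link x y, neg_add_cancel_left]
  intro a b c
  rw [h (circ a b) c, assoc, ← link a b, ← link a (circ b c), ← link b c, ldist,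
    neg_add_rev, h a b]
  simp [← add_assoc, neg_add_cancel_right, neg_add_cancel_left]
end

section
/- If (R, +, ∘) is a left skew ring and · is defined by a·b = −a + (a ∘ b), then (R, +, ·) is a left weak ring; conversely, if (W, +, ·) is a left weak ring and ∘ is defined by a ∘ b = a + a·b, then (W, +, ∘) is a left skew ring. These two constructions are mutually inverse, giving an isomorphism between the category of left skew rings and the category of left weak rings. -/
/-- The category of left skew rings and the category of left weak rings are
canonically isomorphic: from a left skew ring `(R,+,∘)` one gets a left weak
ring `(R,+,·)` with `a·b = -a + (a ∘ b)`; from a left weak ring `(W,+,·)` one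
gets a left skew ring with `a ∘ b = a + a·b`; the two constructions are
mutually inverse, and a map between left skew rings is a morphism (preserves
`+` and `∘`) iff it is a morphism of the associated left weak rings
(preserves `+` and `·`). -/
theorem stmt_16 :
    -- forward construction: skew ring ⟹ weak ring
    (∀ (R : Type) (_ : AddGroup R) (circ : R → R → R),
      (∀ a b c : R, circ (circ a b) c = circ a (circ b c)) →
      (∀ a b c : R, circ a (b + c) = circ a b - a + circ a c) →
      ∀ mul : R → R → R, (∀ a b : R, mul a b = -a + circ a b) →
        (∀ a b c : R, mul (a + mul a b) c = mul a (mul b c)) ∧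
        (∀ a b c : R, mul a (b + c) = mul a b + mul a c) ∧
        -- round trip recovers `∘`
        (∀ a b : R, a + mul a b = circ a b)) ∧
    -- backward construction: weak ring ⟹ skew ring
    (∀ (W : Type) (_ : AddGroup W) (mul : W → W → W),
      (∀ a b c : W, mul (a + mul a b) c = mul a (mul b c)) →
      (∀ a b c : W, mul a (b + c) = mul a b + mul a c) →
      ∀ circ : W → W → W, (∀ a b : W, circ a b = a + mul a b) →
        (∀ a b c : W, circ (circ a b) c = circ a (circ b c)) ∧
        (∀ a b c : W, circ a (b + c) = circ a b - a + circ a c) ∧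
        -- round trip recovers `·`
        (∀ a b : W, -a + circ a b = mul a b)) ∧
    -- morphisms correspond: the isomorphism is the identity on maps
    (∀ (R S : Type) (_ : AddGroup R) (_ : AddGroup S)
        (circR : R → R → R) (circS : S → S → S) (f : R → S),
      (∀ a b : R, f (a + b) = f a + f b) →
      ((∀ a b : R, f (circR a b) = circS (f a) (f b)) ↔
       (∀ a b : R, f (-a + circR a b) = -(f a) + circS (f a) (f b)))) := by
  refine ⟨?_, ?_, ?_⟩
  · intro R _ circ hassoc hdist mul hmul
    -- circ a 0 = a
    have h0 : ∀ a : R, circ a 0 = a := by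
      intro a
      have h := hdist a 0 0
      rw [add_zero] at h
      have h' : circ a 0 + (-a + circ a 0) = circ a 0 := by
        rw [← add_assoc, ← sub_eq_add_neg, ← h]
      have h2 : -a + circ a 0 = 0 := by
        have := add_eq_left.mp h'
        exact this
      have := congrArg (fun y => a + y) h2
      simpa [add_neg_cancel_left] using this
    -- circ a (-b)
    have hneg : ∀ a b : R, circ a (-b) = a + -(circ a b) + a := by
      intro a b
      have h := hdist a b (-b)
      rw [add_neg_cancel, h0] at h
      -- h : a = circ a b - a + circ a (-b)
      have := congrArg (fun y => a + -(circ a b - a) + (circ a b - a) + -(circ a b - a)) h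
      -- simpler: solve directly
      have h2 : circ a (-b) = -(circ a b - a) + a := by
        have := congrArg (fun y => -(circ a b - a) + y) h
        simpa [← add_assoc] using this.symm
      rw [h2]
      simp [sub_eq_add_neg, neg_add_rev, add_assoc]
    constructor
    · intro a b c
      have key : a + mul a b = circ a b := by
        rw [hmul, add_neg_cancel_left]
      rw [key, hmul, hassoc, hmul, hmul, hdist, hneg]
      simp [sub_eq_add_neg, add_assoc]
    constructor
    · intro a b c
      rw [hmul, hdist, hmul, hmul]
      simp [sub_eq_add_neg, add_assoc]
    · intro a b
      rw [hmul, add_neg_cancel_left]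
  · intro W _ mul hwassoc hdist circ hcirc
    constructor
    · intro a b c
      rw [hcirc, hcirc, hcirc, hcirc, hwassoc, hdist]
      simp [add_assoc]
    constructor
    · intro a b c
      rw [hcirc, hcirc, hcirc, hdist]
      simp [sub_eq_add_neg, add_assoc]
    · intro a b
      rw [hcirc, neg_add_cancel_left]
  · intro R S _ _ circR circS f hadd
    have h0 : f 0 = 0 := by
      have := hadd 0 0
      rw [add_zero] at this
      exact (add_eq_left.mp this.symm)
    have hnegf : ∀ a : R, f (-a) = -(f a) := by
      intro a
      have := hadd (-a) a
      rw [neg_add_cancel, h0] at this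
      exact eq_neg_of_add_eq_zero_left this.symm
    constructor
    · intro h a b
      rw [hadd, hnegf, h]
    · intro h a b
      have := h a b
      rw [hadd, hnegf] at this
      have := congrArg (fun y => f a + y) this
      simpa [← add_assoc] using this
end

section
/- A left skew ring (R, +, ∘) is a left skew brace (i.e., (R, ∘) is a group) if and only if its associated left weak ring (R, +, ·), where a·b = −a + (a ∘ b), has local right identities: for every a ∈ R there exists e ∈ R with a·e = a. -/
/-- A left skew ring `(R,+,∘)` is a left skew brace (i.e. `(R,∘)` is a group)
iff its associated left weak ring `(R,+,·)`, `a·b = -a + (a ∘ b)`, has local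
right identities: for every `a` there is `e` with `a·e = a`. -/
theorem stmt_17 {R : Type*} [AddGroup R] (circ : R → R → R)
    (assoc : ∀ a b c : R, circ (circ a b) c = circ a (circ b c))
    (skewdist : ∀ a b c : R, circ a (b + c) = circ a b - a + circ a c)
    (mul : R → R → R) (hmul : ∀ a b : R, mul a b = -a + circ a b) :
    (∃ e : R, (∀ a : R, circ e a = a) ∧ (∀ a : R, circ a e = a) ∧
      ∀ a : R, ∃ b : R, circ a b = e ∧ circ b a = e) ↔
    (∀ a : R, ∃ e : R, mul a e = a) := by
  have h0 : ∀ a : R, circ a 0 = a := by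
    intro a
    have h := skewdist a 0 0
    rw [add_zero] at h
    have h2 : (0 : R) + circ a 0 = circ a 0 - a + circ a 0 := by rw [zero_add]; exact h
    have h3 := add_right_cancel h2
    have h4 : circ a 0 - a = 0 := h3.symm
    exact sub_eq_zero.mp h4
  constructor
  · rintro ⟨e, hel, her, hinv⟩ a
    obtain ⟨b, hab, hba⟩ := hinv a
    refine ⟨circ b (a + a), ?_⟩
    rw [hmul, ← assoc, hab, hel, neg_add_cancel_left]
  · intro H
    -- right inverses w.r.t. 0
    have rinv : ∀ a : R, ∃ b : R, circ a b = 0 := by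
      intro a
      obtain ⟨e, he⟩ := H a
      rw [hmul] at he
      have hae : circ a e = a + a := by
        have := congrArg (fun x => a + x) he
        simpa using this
      have key : circ a (e + -e) = circ a e - a + circ a (-e) := skewdist a e (-e)
      rw [add_neg_cancel, h0, hae] at key
      -- a = a + a - a + circ a (-e)
      have key2 : a = a + circ a (-e) := by
        rw [add_sub_cancel_right] at key; exact key
      refine ⟨-e, ?_⟩
      have := add_left_cancel (a := a) (b := circ a (-e)) (c := 0)
      have h5 : a + circ a (-e) = a + 0 := by rw [add_zero]; exact key2.symm
      exact add_left_cancel h5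
    -- also left inverses w.r.t. 0
    have binv : ∀ a : R, ∃ b : R, circ a b = 0 ∧ circ b a = 0 := by
      intro a
      obtain ⟨b, hab⟩ := rinv a
      obtain ⟨c, hbc⟩ := rinv b
      have hba : circ b a = 0 := by
        calc circ b a = circ (circ b a) 0 := (h0 _).symm
          _ = circ (circ b a) (circ b c) := by rw [hbc]
          _ = circ b (circ (circ a b) c) := by rw [assoc, assoc]
          _ = circ b (circ 0 c) := by rw [hab]
          _ = circ (circ b 0) c := by rw [assoc]
          _ = circ b c := by rw [h0]
          _ = 0 := hbc
      exact ⟨b, hab, hba⟩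
    refine ⟨0, ?_, h0, fun a => binv a⟩
    intro a
    obtain ⟨b, hab, hba⟩ := binv a
    calc circ 0 a = circ (circ a b) a := by rw [hab]
      _ = circ a (circ b a) := assoc a b a
      _ = circ a 0 := by rw [hba]
      _ = a := h0 a
end

section
/- Let (G, +, ∘, ·) be a left diring with ∘ associative, · left distributive, and suppose G is 0-symmetric, i.e., 0 ∘ a = 0 for all a ∈ G. Then a·c = 0 for all a, c ∈ G, i.e., · is the zero operation and a ∘ b = a for all a, b. -/
/-- Let `(G,+,∘,·)` be a left diring with `∘` associative, `·` left
distributive, and `0 ∘ a = 0` for all `a` (0-symmetric). Then `a·c = 0` for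
all `a, c`, and `a ∘ b = a` for all `a, b`. -/
theorem stmt_18 {G : Type*} [AddGroup G] (circ mul : G → G → G)
    (link : ∀ a b : G, a + mul a b = circ a b)
    (assoc : ∀ a b c : G, circ (circ a b) c = circ a (circ b c))
    (ldist : ∀ a b c : G, mul a (b + c) = mul a b + mul a c)
    (symm0 : ∀ a : G, circ 0 a = 0) :
    (∀ a c : G, mul a c = 0) ∧ (∀ a b : G, circ a b = a) := by
  have mul0 : ∀ c : G, mul 0 c = 0 := by
    intro c
    have := (link 0 c).trans (symm0 c)
    simpa using this
  have mulr0 : ∀ a : G, mul a 0 = 0 := by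
    intro a
    have h := ldist a 0 0
    simp at h
    exact h
  have key : ∀ a c : G, mul a c = 0 := by
    intro a c
    have h := assoc a 0 c
    rw [symm0] at h
    rw [← link a 0, mulr0, add_zero] at h
    rw [← link a c] at h
    exact add_eq_left.mp h
  refine ⟨key, fun a b => ?_⟩
  rw [← link, key, add_zero]
end

section
/- Let (G, +) be a group and e an idempotent endomorphism of (G, +). Define a·b = e(b) for all a, b ∈ G. Then (G, +, ·) is a left weak ring, i.e., · is weakly associative ((a + a·b)·c = a·(b·c)) and left distributive; moreover its 0-symmetric part G₀ = { a ∣ 0·a = 0 } equals ker(e) and its constant part G_c = { a ∣ 0·a = a } equals the image e(G). -/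
/-- Let `(G,+)` be a group and `e` an idempotent endomorphism of `(G,+)`.
Define `a·b = e b`. Then `(G,+,·)` is a left weak ring (weakly associative and
left distributive), its `0`-symmetric part `{a | 0·a = 0}` is `ker e`, and its
constant part `{a | 0·a = a}` is the image of `e`. -/
theorem stmt_19 {G : Type*} [AddGroup G] (e : G → G)
    (he_add : ∀ a b : G, e (a + b) = e a + e b)
    (he_idem : ∀ a : G, e (e a) = e a)
    (mul : G → G → G) (hmul : ∀ a b : G, mul a b = e b) :
    (∀ a b c : G, mul (a + mul a b) c = mul a (mul b c)) ∧
    (∀ a b c : G, mul a (b + c) = mul a b + mul a c) ∧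
    {a : G | mul 0 a = 0} = {a : G | e a = 0} ∧
    {a : G | mul 0 a = a} = Set.range e := by
  refine ⟨fun a b c => by simp [hmul, he_idem], fun a b c => by simp [hmul, he_add], ?_, ?_⟩
  · ext a; simp [hmul]
  · ext a
    simp only [Set.mem_setOf_eq, hmul, Set.mem_range]
    exact ⟨fun h => ⟨a, h⟩, fun ⟨x, hx⟩ => by rw [← hx, he_idem]⟩
end
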